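/- arXiv:2004.03911 — 10 statements merged into one kernel-verified Lean document; each statement's English description precedes it below -/
import Mathlib

section
/- Every selectively ω-bounded topological space is pseudocompact. -/
open Filter Topology Set

def SelectivelyOmegaBounded (X : Type*) [TopologicalSpace X] : Prop :=
  ∀ U : ℕ → Set X, (∀ n, IsOpen (U n)) → (∀ n, (U n).Nonempty) →
    ∃ x : ℕ → X, (∀ n, x n ∈ U n) ∧
      ∃ φ : ℕ → ℕ, StrictMono φ ∧ IsCompact (closure (Set.range (x ∘ φ)))

def Pseudocompact (X : Type*) [TopologicalSpace X] : Prop :=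
  ∀ f : C(X, ℝ), ∃ M : ℝ, ∀ x, |f x| ≤ M

def EquicontinuousSet {X : Type*} [TopologicalSpace X] (S : Set C(X, ℝ)) : Prop :=
  Equicontinuous (fun f : S => ⇑(f : C(X, ℝ)))

def AscoliSpace (X : Type*) [TopologicalSpace X] : Prop :=
  ∀ S : Set C(X, ℝ), IsCompact S → EquicontinuousSet S

def SeqAscoliSpace (X : Type*) [TopologicalSpace X] : Prop :=
  ∀ (f : ℕ → C(X, ℝ)) (g : C(X, ℝ)), Tendsto f atTop (𝓝 g) →
    EquicontinuousSet (insert g (Set.range f))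

theorem stmt0 (X : Type*) [TopologicalSpace X] [T35Space X]
    (h : SelectivelyOmegaBounded X) : Pseudocompact X := by
  intro f
  by_contra hM
  push_neg at hM
  have hU : ∀ n : ℕ, IsOpen {x : X | (n : ℝ) < |f x|} := fun n =>
    isOpen_lt continuous_const (continuous_abs.comp f.continuous)
  have hNe : ∀ n : ℕ, {x : X | (n : ℝ) < |f x|}.Nonempty := fun n => by
    obtain ⟨x, hx⟩ := hM n
    exact ⟨x, hx⟩
  obtain ⟨x, hx, φ, hφ, hK⟩ := h _ hU hNe
  obtain ⟨M, hMb⟩ := (hK.image (continuous_abs.comp f.continuous)).bddAbove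
  set k := ⌈M⌉₊ with hk
  have h1 : |f (x (φ k))| ≤ M := hMb ⟨x (φ k), subset_closure ⟨k, rfl⟩, rfl⟩
  have h2 : (φ k : ℝ) < |f (x (φ k))| := hx (φ k)
  have h3 : (k : ℝ) ≤ φ k := Nat.cast_le.mpr hφ.le_apply
  have h4 : M ≤ (k : ℝ) := Nat.le_ceil M
  linarith
end

section
/- A Tychonoff (completely regular Hausdorff) space X belongs to Frolík's class 𝔓* if and only if X is selectively ω-bounded. Here X ∈ 𝔓* means: every infinite family of pairwise disjoint nonempty open subsets of X has an infinite subfamily each member of which meets some fixed compact set. -/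
open Filter Topology Set

def FrolikPStar (X : Type*) [TopologicalSpace X] : Prop :=
  ∀ V : ℕ → Set X, (∀ n, IsOpen (V n)) → (∀ n, (V n).Nonempty) →
    Pairwise (Function.onFun Disjoint V) →
    ∃ K : Set X, IsCompact K ∧ {n : ℕ | (V n ∩ K).Nonempty}.Infinite

/-!
For `⇐`, the closure of the selected subsequence is a compact set meeting infinitely many `V n`.

For `⇒` it suffices to find a compact set meeting infinitely many of the open sets `U n`. In a
regular space either some point lies in infinitely many `U n`, or there are pairwise disjoint
nonempty open `V k ⊆ U (φ k)` with `φ` injective, and then `𝔓*` applies. To prove this dichotomy,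
assume there is no such disjoint family. If an open set `C` meets `U j` for infinitely many `j`,
then some `U m` contains an open `C'` with `closure C' ⊆ C` that still meets infinitely many later
`U j`: otherwise a greedy choice produces a disjoint family. Iterating yields
`C₀ ⊇ closure C₁ ⊇ C₁ ⊇ ⋯` with `C t ⊆ U (m t)`. If `C t \ closure (C (t + 1))` is nonempty for
infinitely many `t`, these differences form a disjoint family; otherwise the sequence is
eventually constant and any of its points lies in every `U (m t)`.
-/

open Function

section

variable {X : Type*} [TopologicalSpace X]

def HasDisjointOpenSubfamily (U : ℕ → Set X) : Prop :=
  ∃ φ : ℕ → ℕ, Injective φ ∧ ∃ V : ℕ → Set X, (∀ k, IsOpen (V k)) ∧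
    (∀ k, (V k).Nonempty) ∧ (∀ k, V k ⊆ U (φ k)) ∧ Pairwise (Disjoint on V)

theorem FrolikPStar.exists_isCompact_infinite_of_hasDisjointOpenSubfamily
    (hP : FrolikPStar X) {U : ℕ → Set X} (hU : HasDisjointOpenSubfamily U) :
    ∃ K : Set X, IsCompact K ∧ {n | (U n ∩ K).Nonempty}.Infinite := by
  obtain ⟨φ, hφ, V, hVo, hVne, hVU, hV⟩ := hU
  obtain ⟨K, hK, hinf⟩ := hP V hVo hVne hV
  refine ⟨K, hK, (hinf.image hφ.injOn).mono ?_⟩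
  rintro _ ⟨k, ⟨x, hxV, hxK⟩, rfl⟩
  exact ⟨x, hVU k hxV, hxK⟩

theorem hasDisjointOpenSubfamily_of_forall_finite {U : ℕ → Set X} {J : Set ℕ}
    (hJ : J.Infinite) (h : ∀ m ∈ J, ∃ V : Set X, IsOpen V ∧ V.Nonempty ∧ V ⊆ U m ∧
      {j ∈ J | (U j ∩ V).Nonempty}.Finite) :
    HasDisjointOpenSubfamily U := by
  choose! V hVo hVne hVU hVfin using h
  obtain ⟨f, hfJ, hf⟩ := exists_seq_of_forall_finset_exists (· ∈ J)
    (fun m n => m ≠ n ∧ Disjoint (U n) (V m)) fun s hs => by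
      have hfin : (↑s ∪ ⋃ m ∈ s, {j ∈ J | (U j ∩ V m).Nonempty}).Finite :=
        s.finite_toSet.union (s.finite_toSet.biUnion fun m hm => hVfin m (hs m hm))
      obtain ⟨y, hyJ, hy⟩ := (hJ.sdiff hfin).nonempty
      refine ⟨y, hyJ, fun m hm => ⟨?_, ?_⟩⟩
      · rintro rfl
        exact hy (Or.inl hm)
      · rw [Set.disjoint_iff_inter_eq_empty, ← Set.not_nonempty_iff_eq_empty]
        exact fun hne => hy (Or.inr (Set.mem_biUnion hm ⟨hyJ, hne⟩))
  refine ⟨f, .of_lt_imp_ne fun k l hkl => (hf k l hkl).1, V ∘ f, fun k => hVo _ (hfJ k),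
    fun k => hVne _ (hfJ k), fun k => hVU _ (hfJ k), ?_⟩
  exact (pairwise_disjoint_on _).2 fun k l hkl =>
    ((hf k l hkl).2.mono_left (hVU _ (hfJ l))).symm

theorem exists_closure_subset_and_infinite_of_not_hasDisjointOpenSubfamily [RegularSpace X]
    {U : ℕ → Set X} (hU : ¬HasDisjointOpenSubfamily U) (hUo : ∀ n, IsOpen (U n))
    {C : Set X} {J : Set ℕ} (hC : IsOpen C) (hJ : J.Infinite)
    (hCJ : ∀ j ∈ J, (U j ∩ C).Nonempty) :
    ∃ m ∈ J, ∃ C' : Set X, IsOpen C' ∧ C' ⊆ U m ∧ closure C' ⊆ C ∧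
      {j ∈ J | m < j ∧ (U j ∩ C').Nonempty}.Infinite := by
  by_contra! h
  refine hU (hasDisjointOpenSubfamily_of_forall_finite hJ fun m hm => ?_)
  obtain ⟨x, hx⟩ := hCJ m hm
  obtain ⟨V, ⟨hxV, hVo⟩, hVcl⟩ :=
    (hasBasis_opens_closure x).mem_iff.1 (((hUo m).inter hC).mem_nhds hx)
  have hVU : V ⊆ U m := subset_closure.trans (hVcl.trans Set.inter_subset_left)
  refine ⟨V, hVo, ⟨x, hxV⟩, hVU, ((h m hm V hVo hVU (hVcl.trans Set.inter_subset_right)).union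
    (Set.finite_Iic m)).subset fun j ⟨hjJ, hjV⟩ => ?_⟩
  exact (lt_or_ge m j).imp (fun hmj => ⟨hjJ, hmj, hjV⟩) id

theorem exists_nested_seq_of_not_hasDisjointOpenSubfamily [RegularSpace X] {U : ℕ → Set X}
    (hU : ¬HasDisjointOpenSubfamily U) (hUo : ∀ n, IsOpen (U n)) (hUne : ∀ n, (U n).Nonempty) :
    ∃ (C : ℕ → Set X) (m : ℕ → ℕ), StrictMono m ∧ (∀ t, IsOpen (C t)) ∧
      (∀ t, (C t).Nonempty) ∧ (∀ t, C t ⊆ U (m t)) ∧ ∀ t, closure (C (t + 1)) ⊆ C t := by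
  let Admissible (p : Set X × Set ℕ) : Prop :=
    IsOpen p.1 ∧ p.2.Infinite ∧ ∀ j ∈ p.2, (U j ∩ p.1).Nonempty
  have step (p) (hp : Admissible p) :=
    exists_closure_subset_and_infinite_of_not_hasDisjointOpenSubfamily hU hUo hp.1 hp.2.1 hp.2.2
  choose! m hmJ C hCo hCU hCcl hJ using step
  let next (p : Set X × Set ℕ) : Set X × Set ℕ :=
    (C p, {j ∈ p.2 | m p < j ∧ (U j ∩ C p).Nonempty})
  let s (t : ℕ) := next^[t] (Set.univ, Set.univ)
  have hs_succ (t : ℕ) : s (t + 1) = next (s t) := iterate_succ_apply' ..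
  have hs_fst (t : ℕ) : (s (t + 1)).1 = C (s t) := by rw [hs_succ]
  have hs_snd (t : ℕ) :
      (s (t + 1)).2 = {j ∈ (s t).2 | m (s t) < j ∧ (U j ∩ C (s t)).Nonempty} := by
    rw [hs_succ]
  have hs (t : ℕ) : Admissible (s t) := by
    induction t with
    | zero => exact ⟨isOpen_univ, Set.infinite_univ, fun j _ => (hUne j).mono fun x hx => ⟨hx, ⟨⟩⟩⟩
    | succ t ih => exact hs_succ t ▸ ⟨hCo _ ih, hJ _ ih, fun j hj => hj.2.2⟩
  refine ⟨fun t => C (s t), fun t => m (s t), strictMono_nat_of_lt_succ fun t => ?_,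
    fun t => hCo _ (hs t), fun t => ?_, fun t => hCU _ (hs t), fun t => ?_⟩
  · have := hmJ _ (hs (t + 1))
    rw [hs_snd] at this
    exact this.2.1
  · obtain ⟨j, hj⟩ := (hs (t + 1)).2.1.nonempty
    rw [hs_snd] at hj
    exact hj.2.2.mono Set.inter_subset_right
  · simpa only [hs_fst] using hCcl _ (hs (t + 1))

theorem pairwise_disjoint_sdiff_closure_succ {C : ℕ → Set X}
    (hC : ∀ t, closure (C (t + 1)) ⊆ C t) :
    Pairwise (Disjoint on fun t => C t \ closure (C (t + 1))) := by
  have hanti : Antitone C := antitone_nat_of_succ_le fun t => subset_closure.trans (hC t)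
  refine (pairwise_disjoint_on _).2 fun j k hjk => disjoint_sdiff_self_left.mono_right ?_
  exact Set.sdiff_subset.trans ((hanti hjk).trans subset_closure)

theorem nonempty_iInter_or_infinite_setOf_sdiff_closure_nonempty {C : ℕ → Set X}
    (hC : ∀ t, closure (C (t + 1)) ⊆ C t) (hne : ∀ t, (C t).Nonempty) :
    (⋂ t, C t).Nonempty ∨ {t | (C t \ closure (C (t + 1))).Nonempty}.Infinite := by
  refine or_iff_not_imp_right.2 fun hfin => ?_
  obtain ⟨T, hT⟩ := (Set.not_infinite.1 hfin).bddAbove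
  have hanti : Antitone C := antitone_nat_of_succ_le fun t => subset_closure.trans (hC t)
  have hsub (t : ℕ) (ht : T < t) : C t ⊆ closure (C (t + 1)) :=
    Set.sdiff_eq_empty.1 (Set.not_nonempty_iff_eq_empty.1 fun h => ht.not_ge (hT h))
  have hclosed (t : ℕ) (ht : T < t) : IsClosed (C (t + 1)) := by
    rw [← (hC (t + 1)).antisymm (hsub (t + 1) (by omega))]
    exact isClosed_closure
  have hconst (k : ℕ) : C (T + 1) ⊆ C (T + 1 + k) := by
    induction k with
    | zero => rfl
    | succ k ih =>
      exact ih.trans ((hsub _ (by omega)).trans (hclosed _ (by omega)).closure_subset)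
  obtain ⟨x, hx⟩ := hne (T + 1)
  exact ⟨x, Set.mem_iInter.2 fun t => hanti (by omega : t ≤ T + 1 + t) (hconst t hx)⟩

theorem exists_infinite_setOf_mem_or_hasDisjointOpenSubfamily [RegularSpace X]
    {U : ℕ → Set X} (hUo : ∀ n, IsOpen (U n)) (hUne : ∀ n, (U n).Nonempty) :
    (∃ x, {n | x ∈ U n}.Infinite) ∨ HasDisjointOpenSubfamily U := by
  refine or_iff_not_imp_right.2 fun hU => ?_
  obtain ⟨C, m, hm, hCo, hCne, hCU, hC⟩ :=
    exists_nested_seq_of_not_hasDisjointOpenSubfamily hU hUo hUne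
  rcases nonempty_iInter_or_infinite_setOf_sdiff_closure_nonempty hC hCne with ⟨x, hx⟩ | hD
  · refine ⟨x, (Set.infinite_range_of_injective hm.injective).mono ?_⟩
    exact Set.range_subset_iff.2 fun t => hCU t (Set.mem_iInter.1 hx t)
  · have hψ := Nat.nth_strictMono hD
    refine (hU ⟨m ∘ _, hm.injective.comp hψ.injective, _, fun k => (hCo _).sdiff isClosed_closure,
      Nat.nth_mem_of_infinite hD, fun k => Set.sdiff_subset.trans (hCU _), ?_⟩).elim
    exact (pairwise_disjoint_sdiff_closure_succ hC).comp_of_injective hψ.injective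

theorem FrolikPStar.exists_isCompact_infinite [RegularSpace X] (hP : FrolikPStar X)
    {U : ℕ → Set X} (hUo : ∀ n, IsOpen (U n)) (hUne : ∀ n, (U n).Nonempty) :
    ∃ K : Set X, IsCompact K ∧ {n | (U n ∩ K).Nonempty}.Infinite := by
  rcases exists_infinite_setOf_mem_or_hasDisjointOpenSubfamily hUo hUne with ⟨x, hx⟩ | hU
  · exact ⟨{x}, isCompact_singleton, hx.mono fun n hn => ⟨x, hn, rfl⟩⟩
  · exact hP.exists_isCompact_infinite_of_hasDisjointOpenSubfamily hU

theorem FrolikPStar.selectivelyOmegaBounded [RegularSpace X] (hP : FrolikPStar X) :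
    SelectivelyOmegaBounded X := by
  intro U hUo hUne
  obtain ⟨K, hK, hinf⟩ := hP.exists_isCompact_infinite hUo hUne
  have (n : ℕ) : ∃ x ∈ U n, (U n ∩ K).Nonempty → x ∈ K := by
    by_cases h : (U n ∩ K).Nonempty
    · exact ⟨h.some, h.some_mem.1, fun _ => h.some_mem.2⟩
    · exact ⟨(hUne n).some, (hUne n).some_mem, fun h' => absurd h' h⟩
  choose x hxU hxK using this
  refine ⟨x, hxU, Nat.nth _, Nat.nth_strictMono hinf, hK.closure_of_subset ?_⟩
  rintro _ ⟨k, rfl⟩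
  exact hxK _ (Nat.nth_mem_of_infinite hinf k)

theorem SelectivelyOmegaBounded.frolikPStar (h : SelectivelyOmegaBounded X) : FrolikPStar X := by
  intro V hVo hVne _
  obtain ⟨x, hx, φ, hφ, hK⟩ := h V hVo hVne
  refine ⟨_, hK, (Set.infinite_range_of_injective hφ.injective).mono ?_⟩
  rintro _ ⟨k, rfl⟩
  exact ⟨x (φ k), hx _, subset_closure ⟨k, rfl⟩⟩

end

theorem stmt5 (X : Type*) [TopologicalSpace X] [T35Space X] :
    FrolikPStar X ↔ SelectivelyOmegaBounded X :=
  ⟨FrolikPStar.selectivelyOmegaBounded, SelectivelyOmegaBounded.frolikPStar⟩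
end

section
/- Let X be a subspace of a topological space Y, let i : X → Y be the inclusion, and let i* : C(Y,ℝ) → C(X,ℝ), i*(g) = g ∘ i, be the restriction map (both function spaces carrying the compact-open topology). If i* is surjective and compact-covering (for every compact K ⊆ C_c(X) there is a compact C ⊆ C_c(Y) with i*(C) = K), and Y is Ascoli, then X is Ascoli. -/
open Filter Topology Set

theorem stmt7 (X Y : Type*) [TopologicalSpace X] [TopologicalSpace Y]
    (i : C(X, Y)) (hi : IsEmbedding i)
    (iStar : C(Y, ℝ) → C(X, ℝ)) (hiStar : ∀ g : C(Y, ℝ), iStar g = g.comp i)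
    (hsurj : Function.Surjective iStar)
    (hcc : ∀ K : Set C(X, ℝ), IsCompact K →
      ∃ C : Set C(Y, ℝ), IsCompact C ∧ iStar '' C = K)
    (hY : AscoliSpace Y) : AscoliSpace X := by
  intro K hK
  obtain ⟨C, hCcomp, hCK⟩ := hcc K hK
  have hC := hY C hCcomp
  intro x U hU
  have h2 := (hi.continuous.tendsto x).eventually (hC (i x) U hU)
  filter_upwards [h2] with x' hx' f
  obtain ⟨g, hgC, hgf⟩ : ∃ g ∈ C, iStar g = (f : C(X, ℝ)) := by
    have hf : (f : C(X, ℝ)) ∈ iStar '' C := hCK ▸ f.2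
    exact hf
  rw [hiStar] at hgf
  have := hx' ⟨g, hgC⟩
  simpa [← hgf] using this
end

section
/- Let X be a subspace of a topological space Y with inclusion i : X → Y, and let i* : C_c(Y) → C_c(X) be the restriction map. If i* is surjective and sequence-covering (for every convergent sequence together with its limit S in C_c(X) there is a convergent sequence with limit C in C_c(Y) with i*(C) = S), and Y is sequentially Ascoli, then X is sequentially Ascoli. -/
open Filter Topology Set

theorem stmt8 (X Y : Type*) [TopologicalSpace X] [TopologicalSpace Y]
    (i : C(X, Y)) (hi : IsEmbedding i)
    (iStar : C(Y, ℝ) → C(X, ℝ)) (hiStar : ∀ g : C(Y, ℝ), iStar g = g.comp i)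
    (hsurj : Function.Surjective iStar)
    (hsc : ∀ (s : ℕ → C(X, ℝ)) (t : C(X, ℝ)), Tendsto s atTop (𝓝 t) →
      ∃ (c : ℕ → C(Y, ℝ)) (d : C(Y, ℝ)), Tendsto c atTop (𝓝 d) ∧
        iStar '' (insert d (Set.range c)) = insert t (Set.range s))
    (hY : SeqAscoliSpace Y) : SeqAscoliSpace X := by
  intro s t hst
  obtain ⟨c, d, hcd, himg⟩ := hsc s t hst
  have hT : EquicontinuousSet (insert d (Set.range c)) := hY c d hcd
  intro x₀
  intro U hU
  have h := hT (i x₀) U hU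
  have h2 : ∀ᶠ x in 𝓝 x₀, ∀ g : (insert d (Set.range c) : Set C(Y, ℝ)),
      ((g : C(Y, ℝ)) (i x₀), (g : C(Y, ℝ)) (i x)) ∈ U :=
    (i.continuous.continuousAt (x := x₀)).eventually h
  filter_upwards [h2] with x hx f
  obtain ⟨f, hfS⟩ := f
  rw [← himg] at hfS
  obtain ⟨g, hgT, rfl⟩ := hfS
  have := hx ⟨g, hgT⟩
  simpa [hiStar] using this
end

section
/- Let X be a Tychonoff pseudocompact space. If the restriction map β* : C(βX) → C_c(X) from the Banach space of continuous functions on the Stone–Čech compactification βX (with sup-norm) to C(X) with the compact-open topology is compact-covering, then X is an Ascoli space. -/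
open Filter Topology Set

noncomputable def betaStar (X : Type*) [TopologicalSpace X] :
    C(StoneCech X, ℝ) → C(X, ℝ) :=
  fun f => f.comp ⟨stoneCechUnit, continuous_stoneCechUnit⟩

theorem stmt9 (X : Type*) [TopologicalSpace X] [T35Space X]
    (hpc : Pseudocompact X)
    (hcc : ∀ K : Set C(X, ℝ), IsCompact K →
      ∃ C : Set C(StoneCech X, ℝ), IsCompact C ∧ betaStar X '' C = K) :
    AscoliSpace X := by
  intro S hS
  obtain ⟨C, hC, hCS⟩ := hcc S hS
  intro x₀
  rw [Metric.equicontinuousAt_iff_right]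
  intro ε hε
  -- totally bounded: finite ε/3 net with centers in C
  obtain ⟨t, hts, htfin, htcov⟩ := (totallyBounded_iff_subset.mp hC.totallyBounded)
    {p : C(StoneCech X, ℝ) × C(StoneCech X, ℝ) | dist p.1 p.2 < ε / 3}
    (Metric.dist_mem_uniformity (by linarith))
  -- each g ∈ t gives continuity at x₀
  have hcont : ∀ᶠ x in 𝓝 x₀, ∀ g ∈ t,
      dist (g (stoneCechUnit x₀)) (g (stoneCechUnit x)) < ε / 3 := by
    rw [eventually_all_finite htfin]
    intro g _
    have hgc : Continuous fun x : X => g (stoneCechUnit x) :=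
      g.continuous.comp continuous_stoneCechUnit
    have := (hgc.tendsto x₀) (Metric.ball_mem_nhds _ (by linarith : (0:ℝ) < ε/3))
    filter_upwards [this] with x hx
    rw [dist_comm]
    exact hx
  filter_upwards [hcont] with x hx
  rintro ⟨f, hf⟩
  rw [← hCS] at hf
  obtain ⟨h, hhC, rfl⟩ := hf
  obtain ⟨g, hgt, hg⟩ := by
    have := htcov hhC
    simpa using this
  have h1 : dist (h (stoneCechUnit x₀)) (g (stoneCechUnit x₀)) < ε / 3 :=
    lt_of_le_of_lt (ContinuousMap.dist_apply_le_dist _) hg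
  have h2 : dist (g (stoneCechUnit x)) (h (stoneCechUnit x)) < ε / 3 := by
    rw [dist_comm]
    exact lt_of_le_of_lt (ContinuousMap.dist_apply_le_dist _) hg
  have h3 := hx g hgt
  calc dist (h (stoneCechUnit x₀)) (h (stoneCechUnit x))
      ≤ dist (h (stoneCechUnit x₀)) (g (stoneCechUnit x₀))
        + dist (g (stoneCechUnit x₀)) (g (stoneCechUnit x))
        + dist (g (stoneCechUnit x)) (h (stoneCechUnit x)) := dist_triangle4 _ _ _ _
    _ < ε / 3 + ε / 3 + ε / 3 := by linarith
    _ = ε := by ring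
end

section
/- Let X be a Tychonoff pseudocompact selectively ω-bounded space. Then the restriction map β* : C(βX) → C_c(X) is compact-covering: for every compact subset K of C_c(X) (with the compact-open topology), the preimage (β*)⁻¹(K) is compact in the Banach space C(βX) with the sup-norm. -/
open Filter Topology Set

lemma exists_antitone_open_nhds {α : Type*} [TopologicalSpace α]
    [FirstCountableTopology α] (z : α) :
    ∃ o : ℕ → Set α, (∀ k, IsOpen (o k)) ∧ (∀ k, z ∈ o k) ∧ Antitone o ∧
      ∀ V ∈ 𝓝 z, ∃ k, o k ⊆ V := by
  obtain ⟨b, hb⟩ := (𝓝 z).exists_antitone_basis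
  refine ⟨fun k => interior (b k), fun k => isOpen_interior,
    fun k => mem_interior_iff_mem_nhds.2 (hb.mem k),
    fun k l hkl => interior_mono (hb.antitone hkl), fun V hV => ?_⟩
  obtain ⟨i, -, hi⟩ := hb.toHasBasis.mem_iff.mp hV
  exact ⟨i, interior_subset.trans hi⟩

lemma tendsto_of_mem_antitone {α : Type*} [TopologicalSpace α] {o : ℕ → Set α} {z : α}
    (hanti : Antitone o) (hbase : ∀ V ∈ 𝓝 z, ∃ k, o k ⊆ V)
    {q : ℕ → α} {ρ : ℕ → ℕ} (hρ : ∀ k, k ≤ ρ k) (hq : ∀ k, q k ∈ o (ρ k)) :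
    Tendsto q atTop (𝓝 z) := by
  refine Filter.tendsto_def.2 fun V hV => ?_
  obtain ⟨k, hk⟩ := hbase V hV
  refine Filter.mem_of_superset (Filter.Ici_mem_atTop k) fun j (hj : k ≤ j) => ?_
  exact hk (hanti (hj.trans (hρ j)) (hq j))

lemma equicont_at {X : Type*} [TopologicalSpace X]
    (hsob : SelectivelyOmegaBounded X)
    {K : Set C(X, ℝ)} (hK : IsCompact K)
    (f : ℕ → C(X, ℝ)) (hf : ∀ n, f n ∈ K) (x0 : X) {ε : ℝ} (hε : 0 < ε) :
    ∃ V : Set (ℕ → ℝ), IsOpen V ∧ (fun n => f n x0) ∈ V ∧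
      ∀ n : ℕ, ∀ x : X, (fun m => f m x) ∈ V → |f n x - f n x0| ≤ ε := by
  by_contra hcon
  push_neg at hcon
  obtain ⟨o, ho_open, ho_mem, ho_anti, ho_basis⟩ :=
    exists_antitone_open_nhds (fun n => f n x0 : ℕ → ℝ)
  have hw : ∀ k, ∃ n x, (fun m => f m x) ∈ o k ∧ ε < |f n x - f n x0| :=
    fun k => hcon (o k) (ho_open k) (ho_mem k)
  choose nn u hu hvio using hw
  -- (b) : coordinatewise convergence of u to x0
  have hb : ∀ m : ℕ, Tendsto (fun k => f m (u k)) atTop (𝓝 (f m x0)) := by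
    have h0 : Tendsto (fun k => (fun m => f m (u k))) atTop (𝓝 (fun n => f n x0)) :=
      tendsto_of_mem_antitone ho_anti ho_basis (fun k => le_refl k) hu
    exact fun m => tendsto_pi_nhds.1 h0 m
  -- open sets for the selection principle
  set G : ℕ → Set X := fun k => ⋂ m ∈ Finset.range (k + 1),
    {x | |f m x - f m x0| < 1 / (k + 1)} with hGdef
  set W : ℕ → Set X := fun i => {x | ε / 2 < |f (nn i) x - f (nn i) x0|} with hWdef
  set V : ℕ → Set X := fun k => G k ∩ ⋃ i, W i with hVdef
  have habs_cont : ∀ m : ℕ, Continuous fun x => |f m x - f m x0| := fun m =>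
    continuous_abs.comp ((f m).continuous.sub continuous_const)
  have hVopen : ∀ k, IsOpen (V k) := by
    intro k
    refine IsOpen.inter ?_ (isOpen_iUnion fun i => ?_)
    · exact isOpen_biInter_finset fun m _ => isOpen_lt (habs_cont m) continuous_const
    · exact isOpen_lt continuous_const (habs_cont (nn i))
  have hVne : ∀ k, (V k).Nonempty := by
    intro k
    have hpos : (0 : ℝ) < 1 / (k + 1) := by positivity
    have hev : ∀ᶠ i in atTop, ∀ m ∈ Finset.range (k + 1), |f m (u i) - f m x0| < 1 / (k + 1) := by
      rw [Filter.eventually_all_finset]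
      intro m _
      have hball : Metric.ball (f m x0) (1 / (k + 1)) ∈ 𝓝 (f m x0) :=
        Metric.ball_mem_nhds _ hpos
      filter_upwards [(hb m).eventually_mem hball] with i hi
      simpa [Real.dist_eq] using hi
    obtain ⟨i0, hi0⟩ := hev.exists
    refine ⟨u i0, ?_, ?_⟩
    · simp only [hGdef, Set.mem_iInter]
      intro m hm
      exact hi0 m hm
    · exact Set.mem_iUnion.2 ⟨i0, by simpa [hWdef] using lt_of_le_of_lt (by linarith) (hvio i0)⟩
  obtain ⟨p', hp'mem, φ, hφ, hCcomp⟩ := hsob V hVopen hVne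
  set C : Set X := closure (Set.range (p' ∘ φ)) with hCdef
  set p : ℕ → X := fun j => p' (φ j) with hpdef
  have hpC : ∀ j, p j ∈ C := fun j => subset_closure ⟨j, rfl⟩
  have hpV : ∀ j, p j ∈ V (φ j) := fun j => hp'mem (φ j)
  -- (ii)
  have hii : ∀ m : ℕ, Tendsto (fun j => f m (p j)) atTop (𝓝 (f m x0)) := by
    intro m
    rw [Metric.tendsto_atTop]
    intro δ hδ
    obtain ⟨J, hJ⟩ := exists_nat_one_div_lt hδ
    refine ⟨max m J, fun j hj => ?_⟩
    have hmj : m ≤ φ j := le_trans (le_trans (le_max_left _ _) hj) hφ.le_apply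
    have hGj : p j ∈ G (φ j) := (hpV j).1
    have h1 : |f m (p j) - f m x0| < 1 / (φ j + 1) := by
      simp only [hGdef, Set.mem_iInter] at hGj
      exact hGj m (Finset.mem_range_succ_iff.2 hmj)
    have h2 : (1 : ℝ) / (φ j + 1) ≤ 1 / (J + 1) := by
      have hJj : (J : ℝ) ≤ φ j := by
        exact_mod_cast le_trans (le_trans (le_max_right _ _) hj) hφ.le_apply
      apply one_div_le_one_div_of_le
      · positivity
      · linarith
    rw [Real.dist_eq]
    exact lt_of_lt_of_le h1 (le_trans h2 hJ.le)
  -- witnesses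
  have hwit : ∀ j, ∃ i, ε / 2 < |f (nn i) (p j) - f (nn i) x0| := by
    intro j
    obtain ⟨i, hi⟩ := Set.mem_iUnion.1 (hpV j).2
    exact ⟨i, hi⟩
  choose iw hiw using hwit
  set N : ℕ → ℕ := fun j => nn (iw j) with hNdef
  -- restriction to the compact set C' = insert x0 C
  set C' : Set X := insert x0 C with hC'def
  have hC'comp : IsCompact C' := hCcomp.insert x0
  haveI : CompactSpace C' := isCompact_iff_compactSpace.mp hC'comp
  set ι : C(C', X) := ⟨Subtype.val, continuous_subtype_val⟩ with hιdef
  set R : C(X, ℝ) → C(C', ℝ) := fun h => h.comp ι with hRdef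
  have hRcont : Continuous R := ContinuousMap.continuous_precomp ι
  have hTcomp : IsCompact (R '' K) := hK.image hRcont
  have hρmem : ∀ j, R (f (N j)) ∈ R '' K := fun j => ⟨f (N j), hf _, rfl⟩
  obtain ⟨g, -, ψ, hψ, hψtend⟩ := hTcomp.tendsto_subseq hρmem
  rw [Metric.tendsto_atTop] at hψtend
  have hε16 : (0 : ℝ) < ε / 16 := by linarith
  obtain ⟨L, hL⟩ := hψtend (ε / 16) hε16
  set m0 : ℕ := N (ψ L) with hm0def
  have hm0dist : dist (R (f m0)) g < ε / 16 := hL L le_rfl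
  obtain ⟨J1, hJ1⟩ := Metric.tendsto_atTop.mp (hii m0) (ε / 16) hε16
  set l : ℕ := max L J1 with hldef
  set j : ℕ := ψ l with hjdef
  have hjJ1 : J1 ≤ j := le_trans (le_max_right _ _) hψ.le_apply
  have hdistl : dist (R (f (N j))) g < ε / 16 := hL l (le_max_left _ _)
  set pj : C' := ⟨p j, Set.mem_insert_of_mem _ (hpC j)⟩ with hpjdef
  set x0' : C' := ⟨x0, Set.mem_insert _ _⟩ with hx0'def
  -- pointwise estimates
  have e1 : dist (f m0 (p j)) (g pj) < ε / 16 := by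
    have h := lt_of_le_of_lt (ContinuousMap.dist_apply_le_dist (f := R (f m0)) (g := g) pj) hm0dist
    simpa [hRdef, hιdef] using h
  have e2 : dist (f m0 x0) (g x0') < ε / 16 := by
    have h := lt_of_le_of_lt (ContinuousMap.dist_apply_le_dist (f := R (f m0)) (g := g) x0') hm0dist
    simpa [hRdef, hιdef] using h
  have e3 : dist (f m0 (p j)) (f m0 x0) < ε / 16 := hJ1 j hjJ1
  have e4 : dist (f (N j) (p j)) (g pj) < ε / 16 := by
    have h := lt_of_le_of_lt (ContinuousMap.dist_apply_le_dist (f := R (f (N j))) (g := g) pj) hdistl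
    simpa [hRdef, hιdef] using h
  have e5 : dist (f (N j) x0) (g x0') < ε / 16 := by
    have h := lt_of_le_of_lt (ContinuousMap.dist_apply_le_dist (f := R (f (N j))) (g := g) x0') hdistl
    simpa [hRdef, hιdef] using h
  have e6 : ε / 2 < dist (f (N j) (p j)) (f (N j) x0) := by
    rw [Real.dist_eq]; exact hiw j
  -- combine
  have upper : dist (g pj) (g x0') < 3 * (ε / 16) := by
    calc dist (g pj) (g x0') ≤ dist (g pj) (f m0 (p j)) + dist (f m0 (p j)) (f m0 x0)
        + dist (f m0 x0) (g x0') := dist_triangle4 _ _ _ _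
    _ < ε / 16 + ε / 16 + ε / 16 := by
        rw [dist_comm (g pj)]
        linarith
    _ = 3 * (ε / 16) := by ring
  have lower : ε / 2 - 2 * (ε / 16) < dist (g pj) (g x0') := by
    have := dist_triangle4 (f (N j) (p j)) (g pj) (g x0') (f (N j) x0)
    rw [dist_comm (g x0') (f (N j) x0)] at this
    linarith
  linarith


lemma range_psi_compact {X : Type*} [TopologicalSpace X] (hpc : Pseudocompact X)
    (hsob : SelectivelyOmegaBounded X) (f : ℕ → C(X, ℝ)) :
    IsCompact (Set.range (fun x : X => (fun n : ℕ => f n x))) := by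
  set Ψ : X → (ℕ → ℝ) := fun x => (fun n : ℕ => f n x) with hΨdef
  have hΨcont : Continuous Ψ := continuous_pi fun n => (f n).continuous
  choose M hM using fun n => hpc (f n)
  set Q : Set (ℕ → ℝ) := Set.pi Set.univ (fun n => Set.Icc (-(M n)) (M n)) with hQdef
  have hQcomp : IsCompact Q := isCompact_univ_pi fun n => isCompact_Icc
  have hPQ : Set.range Ψ ⊆ Q := by
    rintro _ ⟨x, rfl⟩ n -
    have := hM n x
    rw [abs_le] at this
    exact ⟨by linarith [this.1], this.2⟩
  have hclosure_sub : closure (Set.range Ψ) ⊆ Q := closure_minimal hPQ hQcomp.isClosed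
  have hccomp : IsCompact (closure (Set.range Ψ)) :=
    hQcomp.of_isClosed_subset isClosed_closure hclosure_sub
  have hkey : closure (Set.range Ψ) ⊆ Set.range Ψ := by
    intro z hz
    obtain ⟨q, hqP, hqz⟩ := mem_closure_iff_seq_limit.mp hz
    choose xx hxx using hqP
    obtain ⟨o, ho_open, ho_mem, ho_anti, ho_basis⟩ := exists_antitone_open_nhds z
    have hUne : ∀ k, (Ψ ⁻¹' o k).Nonempty := by
      intro k
      have hev : ∀ᶠ i in atTop, q i ∈ o k :=
        hqz.eventually_mem ((ho_open k).mem_nhds (ho_mem k))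
      obtain ⟨i, hi⟩ := hev.exists
      exact ⟨xx i, by rw [Set.mem_preimage, hxx i]; exact hi⟩
    obtain ⟨y, hy, φ, hφ, hCc⟩ := hsob _ (fun k => (ho_open k).preimage hΨcont) hUne
    have htend : Tendsto (fun k => Ψ (y (φ k))) atTop (𝓝 z) :=
      tendsto_of_mem_antitone ho_anti ho_basis (fun k => hφ.le_apply)
        (fun k => hy (φ k))
    have hImg : IsCompact (Ψ '' closure (Set.range (y ∘ φ))) := hCc.image hΨcont
    have hz' : z ∈ Ψ '' closure (Set.range (y ∘ φ)) :=
      hImg.isClosed.mem_of_tendsto htend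
        (Filter.Eventually.of_forall fun k =>
          ⟨y (φ k), subset_closure ⟨k, rfl⟩, rfl⟩)
    obtain ⟨w, -, hw⟩ := hz'
    exact ⟨w, hw⟩
  have heq : Set.range Ψ = closure (Set.range Ψ) :=
    Subset.antisymm subset_closure hkey
  rw [heq]
  exact hccomp

lemma eval_bound {X : Type*} [TopologicalSpace X] {K : Set C(X, ℝ)} (hK : IsCompact K)
    (hne : K.Nonempty) (x : X) : ∃ B : ℝ, ∀ h ∈ K, |h x| ≤ B := by
  have hc : Continuous fun h : C(X, ℝ) => |h x| :=
    continuous_abs.comp (ContinuousEvalConst.continuous_eval_const x)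
  obtain ⟨h0, _, hmax⟩ := hK.exists_isMaxOn hne hc.continuousOn
  exact ⟨|h0 x|, hmax⟩

lemma main_cauchy {X : Type*} [TopologicalSpace X]
    (hpc : Pseudocompact X) (hsob : SelectivelyOmegaBounded X)
    {K : Set C(X, ℝ)} (hK : IsCompact K)
    (f : ℕ → C(X, ℝ)) (hf : ∀ n, f n ∈ K) :
    ∃ φ : ℕ → ℕ, StrictMono φ ∧
      ∀ ε : ℝ, 0 < ε → ∃ N, ∀ i ≥ N, ∀ j ≥ N, ∀ x : X,
        |f (φ i) x - f (φ j) x| ≤ ε := by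
  rcases isEmpty_or_nonempty X with hX | hX
  · exact ⟨id, strictMono_id, fun ε hε => ⟨0, fun i _ j _ x => (hX.false x).elim⟩⟩
  set Ψ : X → (ℕ → ℝ) := fun x => (fun n : ℕ => f n x) with hΨdef
  set P : Set (ℕ → ℝ) := Set.range Ψ with hPdef
  have hPcomp : IsCompact P := range_psi_compact hpc hsob f
  have hPne : P.Nonempty := ⟨Ψ (Classical.arbitrary X), ⟨Classical.arbitrary X, rfl⟩⟩
  haveI : Nonempty P := hPne.to_subtype
  -- countable dense subset of P
  obtain ⟨s, hscount, hsdense⟩ := TopologicalSpace.exists_countable_dense (↥P)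
  set D : Set (ℕ → ℝ) := Subtype.val '' s with hDdef
  have hDsub : D ⊆ P := by rintro _ ⟨⟨w, hw⟩, -, rfl⟩; exact hw
  have hDcount : D.Countable := (hscount.image _)
  have hDdense : ∀ V : Set (ℕ → ℝ), IsOpen V → ∀ z ∈ P, z ∈ V → (V ∩ D).Nonempty := by
    intro V hVopen z hzP hzV
    have hU : (Subtype.val ⁻¹' V : Set ↥P).Nonempty := ⟨⟨z, hzP⟩, hzV⟩
    obtain ⟨⟨w, hwP⟩, hw1, hw2⟩ :=
      hsdense.inter_open_nonempty _ (hVopen.preimage continuous_subtype_val) hU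
    exact ⟨w, hw1, ⟨⟨w, hwP⟩, hw2, rfl⟩⟩
  have hDne : D.Nonempty := by
    obtain ⟨z, hz⟩ := hPne
    obtain ⟨w, -, hw⟩ := hDdense Set.univ isOpen_univ z hz trivial
    exact ⟨w, hw⟩
  obtain ⟨d, hdrange⟩ := hDcount.exists_eq_range hDne
  have hdP : ∀ t : ℕ, d t ∈ P := fun t => hDsub (hdrange ▸ Set.mem_range_self t)
  choose xd hxd using fun t => hdP t
  -- uniform pointwise bounds at the points xd t
  have hKne : K.Nonempty := ⟨f 0, hf 0⟩
  choose B hB using fun t => eval_bound hK hKne (xd t)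
  -- Bolzano–Weierstrass extraction: pointwise convergence at all d t simultaneously
  set Wv : ℕ → (ℕ → ℝ) := fun n => (fun t : ℕ => d t n) with hWvdef
  have hWvmem : ∀ n, Wv n ∈ Set.pi Set.univ (fun t : ℕ => Set.Icc (-(B t)) (B t)) := by
    intro n
    rw [Set.mem_univ_pi]
    intro t
    have h1 : Wv n t = f n (xd t) := by rw [hWvdef]; exact (congrFun (hxd t) n).symm
    rw [h1]
    have h2 := hB t (f n) (hf n)
    rw [abs_le] at h2
    exact ⟨by linarith [h2.1], h2.2⟩
  obtain ⟨wlim, -, σ, hσ, hσtend⟩ :=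
    (isCompact_univ_pi fun t : ℕ => isCompact_Icc).tendsto_subseq hWvmem
  have hcauchy_at : ∀ t : ℕ, CauchySeq fun i => d t (σ i) := by
    intro t
    have h1 : Tendsto (fun i => Wv (σ i) t) atTop (𝓝 (wlim t)) := tendsto_pi_nhds.1 hσtend t
    exact h1.cauchySeq
  refine ⟨σ, hσ, ?_⟩
  intro ε hε
  have hε5 : 0 < ε / 5 := by linarith
  have hEQ : ∀ x : X, ∃ V : Set (ℕ → ℝ), IsOpen V ∧ Ψ x ∈ V ∧
      ∀ n : ℕ, ∀ y : X, Ψ y ∈ V → |f n y - f n x| ≤ ε / 5 :=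
    fun x => equicont_at hsob hK f hf x hε5
  choose Vx hVxopen hVxmem hVxprop using hEQ
  obtain ⟨t, ht⟩ := hPcomp.elim_finite_subcover (fun x : X => Vx x) hVxopen
    (by rintro _ ⟨x, rfl⟩; exact Set.mem_iUnion.2 ⟨x, hVxmem x⟩)
  have hpick : ∀ x : X, ∃ tt : ℕ, d tt ∈ Vx x := by
    intro x
    obtain ⟨w, hw1, hw2⟩ := hDdense (Vx x) (hVxopen x) (Ψ x) ⟨x, rfl⟩ (hVxmem x)
    rw [hdrange] at hw2
    obtain ⟨tt, rfl⟩ := hw2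
    exact ⟨tt, hw1⟩
  choose τ hτ using hpick
  have hCau : ∀ x : X, ∃ N : ℕ, ∀ i ≥ N, ∀ j ≥ N,
      dist (d (τ x) (σ i)) (d (τ x) (σ j)) < ε / 5 :=
    fun x => Metric.cauchySeq_iff.mp (hcauchy_at (τ x)) (ε / 5) hε5
  choose NN hNN using hCau
  refine ⟨t.sup NN, fun i hi j hj x => ?_⟩
  obtain ⟨x0, hx0t, hmemV⟩ := Set.mem_iUnion₂.1 (ht ⟨x, rfl⟩)
  set y : X := xd (τ x0) with hydef
  have hdV : Ψ y ∈ Vx x0 := by rw [hxd (τ x0)]; exact hτ x0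
  have hNle : NN x0 ≤ t.sup NN := Finset.le_sup hx0t
  -- the five estimates
  have A1i : |f (σ i) x - f (σ i) x0| ≤ ε / 5 := hVxprop x0 (σ i) x hmemV
  have A1j : |f (σ j) x - f (σ j) x0| ≤ ε / 5 := hVxprop x0 (σ j) x hmemV
  have A2i : |f (σ i) y - f (σ i) x0| ≤ ε / 5 := hVxprop x0 (σ i) y hdV
  have A2j : |f (σ j) y - f (σ j) x0| ≤ ε / 5 := hVxprop x0 (σ j) y hdV
  have A3 : |f (σ i) y - f (σ j) y| ≤ ε / 5 := by
    have h1 := hNN x0 i (le_trans hNle hi) j (le_trans hNle hj)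
    have h2 : d (τ x0) (σ i) = f (σ i) y := by rw [← hxd (τ x0)]
    have h3 : d (τ x0) (σ j) = f (σ j) y := by rw [← hxd (τ x0)]
    rw [h2, h3, Real.dist_eq] at h1
    exact h1.le
  -- combine
  have habs1 : |f (σ i) x - f (σ i) y| ≤ 2 * (ε / 5) := by
    have := abs_sub_le (f (σ i) x) (f (σ i) x0) (f (σ i) y)
    have h2 : |f (σ i) x0 - f (σ i) y| = |f (σ i) y - f (σ i) x0| := abs_sub_comm _ _
    linarith
  have habs2 : |f (σ j) y - f (σ j) x| ≤ 2 * (ε / 5) := by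
    have := abs_sub_le (f (σ j) y) (f (σ j) x0) (f (σ j) x)
    have h2 : |f (σ j) x0 - f (σ j) x| = |f (σ j) x - f (σ j) x0| := abs_sub_comm _ _
    linarith
  have hfin : |f (σ i) x - f (σ j) x| ≤
      |f (σ i) x - f (σ i) y| + |f (σ i) y - f (σ j) y| + |f (σ j) y - f (σ j) x| := by
    have h1 := abs_sub_le (f (σ i) x) (f (σ i) y) (f (σ j) x)
    have h2 := abs_sub_le (f (σ i) y) (f (σ j) y) (f (σ j) x)
    linarith
  linarith

theorem stmt10 (X : Type*) [TopologicalSpace X] [T35Space X]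
    (hpc : Pseudocompact X) (hsob : SelectivelyOmegaBounded X)
    (K : Set C(X, ℝ)) (hK : IsCompact K) :
    IsCompact (betaStar X ⁻¹' K) := by
  have hseq : IsSeqCompact (betaStar X ⁻¹' K) := by
    intro g hg
    obtain ⟨φ, hφ, hcau⟩ := main_cauchy hpc hsob hK (fun n => betaStar X (g n)) (fun n => hg n)
    have hCS : CauchySeq fun l => g (φ l) := by
      rw [Metric.cauchySeq_iff]
      intro ε hε
      obtain ⟨N, hN⟩ := hcau (ε / 2) (by linarith)
      refine ⟨N, fun i hi j hj => ?_⟩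
      have hle : dist (g (φ i)) (g (φ j)) ≤ ε / 2 := by
        rw [ContinuousMap.dist_le (by linarith)]
        intro y
        have hclosed : IsClosed {y : StoneCech X | dist (g (φ i) y) (g (φ j) y) ≤ ε / 2} :=
          isClosed_le (Continuous.dist (g (φ i)).continuous (g (φ j)).continuous)
            continuous_const
        have hsub : Set.range (stoneCechUnit : X → StoneCech X) ⊆
            {y : StoneCech X | dist (g (φ i) y) (g (φ j) y) ≤ ε / 2} := by
          rintro _ ⟨x, rfl⟩
          have hNx := hN i hi j hj x
          simpa [betaStar, Real.dist_eq] using hNx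
        have hcl : closure (Set.range (stoneCechUnit : X → StoneCech X)) ⊆
            {y : StoneCech X | dist (g (φ i) y) (g (φ j) y) ≤ ε / 2} :=
          closure_minimal hsub hclosed
        exact hcl (denseRange_stoneCechUnit y)
      linarith
    obtain ⟨G, hG⟩ := cauchySeq_tendsto_of_complete hCS
    refine ⟨G, ?_, φ, hφ, hG⟩
    have hcont : Continuous (betaStar X) :=
      ContinuousMap.continuous_precomp _
    have htd : Tendsto (fun l => betaStar X (g (φ l))) atTop (𝓝 (betaStar X G)) :=
      (hcont.tendsto G).comp hG
    exact hK.isClosed.mem_of_tendsto htd (Filter.Eventually.of_forall fun l => hg (φ l))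
  exact hseq.isCompact
end

section
/- Every Tychonoff pseudocompact sequentially Ascoli space is selectively ω-bounded. -/
open Filter Topology Set

/-! If some compact set meets infinitely many of the open sets `Uₙ`, pick the points inside it.
Otherwise Urysohn functions `fₙ` peaking in `Uₙ` converge to `0` in `C_c(X)`; the sequential Ascoli
property makes them equicontinuous, so the sets `{fₙ > 1/2}` form an infinite locally finite family
of nonempty open sets, and `∑ n • gₙ` for bumps `gₙ` inside them is an unbounded continuous
function, contradicting pseudocompactness. -/

section

variable {X : Type*} [TopologicalSpace X]

theorem exists_continuousMap_eq_one_support_subset [CompletelyRegularSpace X] {U : Set X}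
    (hU : IsOpen U) {x : X} (hx : x ∈ U) :
    ∃ f : C(X, ℝ), f x = 1 ∧ (∀ y, 0 ≤ f y) ∧ Function.support f ⊆ U := by
  obtain ⟨g, hg, hgx, hgU⟩ := CompletelyRegularSpace.completely_regular_isOpen x U hU hx
  refine ⟨⟨fun y => 1 - (g y : ℝ), continuous_const.sub (continuous_subtype_val.comp hg)⟩,
    by simp [hgx], fun y => sub_nonneg.2 (g y).2.2, fun y hy => ?_⟩
  by_contra hyU
  exact hy (by simp [hgU hyU])

theorem exists_strictMono_isCompact_closure_of_infinite [R1Space X] {U : ℕ → Set X}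
    (hne : ∀ n, (U n).Nonempty) {K : Set X} (hK : IsCompact K)
    (hinf : {n | (U n ∩ K).Nonempty}.Infinite) :
    ∃ x : ℕ → X, (∀ n, x n ∈ U n) ∧
      ∃ φ : ℕ → ℕ, StrictMono φ ∧ IsCompact (closure (range (x ∘ φ))) := by
  have hpick : ∀ n, ∃ y ∈ U n, (U n ∩ K).Nonempty → y ∈ K := fun n => by
    by_cases h : (U n ∩ K).Nonempty
    · exact ⟨h.some, h.some_mem.1, fun _ => h.some_mem.2⟩
    · exact ⟨(hne n).some, (hne n).some_mem, fun h' => absurd h' h⟩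
  choose x hxU hxK using hpick
  refine ⟨x, hxU, _, Nat.nth_strictMono hinf, hK.closure_of_subset ?_⟩
  rintro _ ⟨k, rfl⟩
  exact hxK _ (Nat.nth_mem_of_infinite hinf k)

theorem ContinuousMap.tendsto_cofinite_zero_of_support_subset {ι : Type*} {f : ι → C(X, ℝ)}
    {U : ι → Set X} (hfU : ∀ i, Function.support (f i) ⊆ U i)
    (hU : ∀ K, IsCompact K → {i | (U i ∩ K).Nonempty}.Finite) :
    Tendsto f cofinite (𝓝 0) := by
  rw [ContinuousMap.tendsto_iff_forall_isCompact_tendstoUniformlyOn]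
  intro K hK
  rw [Metric.tendstoUniformlyOn_iff]
  intro ε hε
  filter_upwards [(hU K hK).eventually_cofinite_notMem] with i hi y hy
  have hfy : f i y = 0 := by_contra fun h => hi ⟨y, hfU i h, hy⟩
  simp [hfy, hε]

theorem Equicontinuous.locallyFinite_setOf_lt {ι : Type*} {f : ι → X → ℝ}
    (hf : Equicontinuous f) (h0 : ∀ z, Tendsto (fun i => f i z) cofinite (𝓝 0))
    {ε : ℝ} (hε : 0 < ε) : LocallyFinite fun i => {y | ε < f i y} := by
  intro z
  refine ⟨_, Metric.equicontinuousAt_iff_right.mp (hf z) (ε / 2) (half_pos hε), ?_⟩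
  refine (eventually_cofinite.mp ((h0 z).eventually (eventually_lt_nhds (half_pos hε)))).subset ?_
  rintro i ⟨y, hy : ε < f i y, hzy⟩ hi
  have := (abs_lt.mp (Real.dist_eq _ _ ▸ hzy i)).1
  linarith

theorem Pseudocompact.not_locallyFinite [CompletelyRegularSpace X] (hpc : Pseudocompact X)
    {U : ℕ → Set X} (hUo : ∀ n, IsOpen (U n)) (hUne : ∀ n, (U n).Nonempty) :
    ¬ LocallyFinite U := by
  intro hlf
  choose x hx using hUne
  choose g hgx hg0 hgU using fun n => exists_continuousMap_eq_one_support_subset (hUo n) (hx n)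
  have hsupp : LocallyFinite fun n : ℕ => Function.support fun y => (n : ℝ) * g n y :=
    hlf.subset fun n => (Function.support_mul_subset_right _ _).trans (hgU n)
  let F : C(X, ℝ) := ⟨fun y => ∑ᶠ n : ℕ, (n : ℝ) * g n y,
    continuous_finsum (fun n => continuous_const.mul (g n).continuous) hsupp⟩
  have hFx : ∀ n : ℕ, (n : ℝ) ≤ F (x n) := fun n => by
    have := single_le_finsum n (hsupp.point_finite (x n))
      fun j => mul_nonneg j.cast_nonneg (hg0 j _)
    simp only [hgx n, mul_one] at this
    exact this
  obtain ⟨M, hM⟩ := hpc F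
  obtain ⟨n, hn⟩ := exists_nat_gt M
  linarith [hFx n, le_abs_self (F (x n)), hM (x n)]

end

theorem stmt11 (X : Type*) [TopologicalSpace X] [T35Space X]
    (hpc : Pseudocompact X) (hsa : SeqAscoliSpace X) :
    SelectivelyOmegaBounded X := by
  intro U hUo hUne
  by_cases h : ∃ K, IsCompact K ∧ {n | (U n ∩ K).Nonempty}.Infinite
  · obtain ⟨K, hK, hinf⟩ := h
    exact exists_strictMono_isCompact_closure_of_infinite hUne hK hinf
  push Not at h
  choose x hx using hUne
  choose f hfx _ hfU using fun n => exists_continuousMap_eq_one_support_subset (hUo n) (hx n)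
  have htends : Tendsto f cofinite (𝓝 0) :=
    ContinuousMap.tendsto_cofinite_zero_of_support_subset hfU h
  have hequi : Equicontinuous fun n => ⇑(f n) :=
    (hsa f 0 (Nat.cofinite_eq_atTop ▸ htends)).comp
      fun n => ⟨f n, mem_insert_of_mem _ (mem_range_self n)⟩
  have hpt : ∀ z, Tendsto (fun n => f n z) cofinite (𝓝 0) := fun z =>
    ((continuous_eval_const z).tendsto 0).comp htends
  exact absurd (hequi.locallyFinite_setOf_lt hpt one_half_pos)
    (hpc.not_locallyFinite (fun n => isOpen_lt continuous_const (f n).continuous)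
      fun n => ⟨x n, by norm_num [hfx n]⟩)
end

section
/- If X is a Tychonoff space such that every sequence (f_n) of continuous functions converging in C_c(X) to some g is equicontinuous at every point, and (U_n) is a sequence of nonempty open subsets of X such that every choice x_n ∈ U_n has no subsequence with compact closure, and (f_n) are continuous functions f_n : X → [0,1] with f_n = 0 outside U_n, then f_n → 0 in the compact-open topology. -/
open Filter Topology Set

/-!
If infinitely many `U n` met a compact `K`, points of `U n ∩ K` would form a subsequence lying
in `K`, and its closure is compact because `X` is R₁. So only finitely many `U n` meet `K`, and
`f n` vanishes identically on `K` for large `n`.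
-/

theorem ContinuousMap.tendsto_zero_of_forall_isCompact_eventually_eqOn_zero {X β ι : Type*}
    [TopologicalSpace X] [UniformSpace β] [Zero β] {p : Filter ι} {F : ι → C(X, β)}
    (h : ∀ K, IsCompact K → ∀ᶠ i in p, EqOn (F i) 0 K) : Tendsto F p (𝓝 0) := by
  rw [ContinuousMap.tendsto_iff_forall_isCompact_tendstoUniformlyOn]
  exact fun K hK => (tendsto_const_nhds.tendstoUniformlyOn_const K).congr
    ((h K hK).mono fun _ hi => hi.symm)

theorem finite_setOf_inter_nonempty_of_isCompact {X : Type*} [TopologicalSpace X] [R1Space X]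
    {U : ℕ → Set X} (hUne : ∀ n, (U n).Nonempty)
    (hbad : ∀ x : ℕ → X, (∀ n, x n ∈ U n) →
      ¬ ∃ φ : ℕ → ℕ, StrictMono φ ∧ IsCompact (closure (Set.range (x ∘ φ))))
    {K : Set X} (hK : IsCompact K) : {n | (U n ∩ K).Nonempty}.Finite := by
  by_contra hinf
  have hchoice : ∀ n, ∃ y ∈ U n, (U n ∩ K).Nonempty → y ∈ K := fun n => by
    by_cases hn : (U n ∩ K).Nonempty
    · exact ⟨hn.some, hn.some_mem.1, fun _ => hn.some_mem.2⟩
    · exact ⟨(hUne n).some, (hUne n).some_mem, fun h => (hn h).elim⟩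
  choose x hxU hxK using hchoice
  refine hbad x hxU ⟨Nat.nth (fun n => (U n ∩ K).Nonempty), Nat.nth_strictMono hinf, ?_⟩
  refine hK.closure_of_subset ?_
  rintro _ ⟨n, rfl⟩
  exact hxK _ (Nat.nth_mem_of_infinite hinf n)

theorem stmt13_general (X : Type*) [TopologicalSpace X] [T35Space X]
    (U : ℕ → Set X) (hUne : ∀ n, (U n).Nonempty)
    (hbad : ∀ x : ℕ → X, (∀ n, x n ∈ U n) →
      ¬ ∃ φ : ℕ → ℕ, StrictMono φ ∧ IsCompact (closure (Set.range (x ∘ φ))))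
    (f : ℕ → C(X, ℝ))
    (hfsupp : ∀ n, ∀ x ∉ U n, f n x = 0) :
    Tendsto f atTop (𝓝 0) := by
  refine ContinuousMap.tendsto_zero_of_forall_isCompact_eventually_eqOn_zero fun K hK => ?_
  have hfin := finite_setOf_inter_nonempty_of_isCompact hUne hbad hK
  rw [← Nat.cofinite_eq_atTop]
  filter_upwards [hfin.eventually_cofinite_notMem] with n hn z hz
  exact hfsupp n z fun hzU => hn ⟨z, hzU, hz⟩

theorem stmt13 (X : Type*) [TopologicalSpace X] [T35Space X]
    (hseq : ∀ (f : ℕ → C(X, ℝ)) (g : C(X, ℝ)), Tendsto f atTop (𝓝 g) →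
      ∀ x : X, EquicontinuousAt (fun n => ⇑(f n)) x)
    (U : ℕ → Set X) (hUo : ∀ n, IsOpen (U n)) (hUne : ∀ n, (U n).Nonempty)
    (hbad : ∀ x : ℕ → X, (∀ n, x n ∈ U n) →
      ¬ ∃ φ : ℕ → ℕ, StrictMono φ ∧ IsCompact (closure (Set.range (x ∘ φ))))
    (f : ℕ → C(X, ℝ)) (hf01 : ∀ n x, f n x ∈ Set.Icc (0 : ℝ) 1)
    (hfsupp : ∀ n, ∀ x ∉ U n, f n x = 0) :
    Tendsto f atTop (𝓝 0) :=
  stmt13_general X U hUne hbad f hfsupp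
end

section
/- If X is a selectively ω-bounded Tychonoff pseudocompact space, then every compact subset of C_c(X) (the space C(X,ℝ) with the compact-open topology) is metrizable. -/
open Filter Topology Set

/-!
Pseudocompactness makes every `f ∈ C(X, ℝ)` bounded, so `K` maps injectively into the Banach
space `X →ᵇ ℝ`, and the map back to `C(X, ℝ)` is continuous. It therefore suffices that every
sequence in `K` has a subsequence converging uniformly to a point of `K`.

Selective ω-boundedness enters twice. Convergence in `C_c(X)` is already uniform: points witnessing
the failure would have a subsequence inside a compact set, on which convergence is uniform. And `K`
is sequentially compact: for a sequence `(F k)` the trace map `x ↦ (F k x)ₖ` into `ℝ^ℕ` has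
separable range, so some subsequence converges on a countable set `D` with dense traces. Every
cluster point of that subsequence factors through the trace map, and the factor is sequentially
continuous (again by selective ω-boundedness), so all cluster points agree on `D`, hence everywhere.
-/

open TopologicalSpace BoundedContinuousFunction

theorem MapClusterPt.eq_of_tendsto {α X : Type*} [TopologicalSpace X] [T2Space X] {l : Filter α}
    {u : α → X} {x y : X} (hx : MapClusterPt x l u) (hu : Tendsto u l (𝓝 y)) : x = y :=
  eq_of_nhds_neBot (hx.clusterPt.mono hu)

theorem exists_countable_range_subset_closure_image {X Y : Type*} [TopologicalSpace Y]
    [SeparableSpace Y] [PseudoMetrizableSpace Y] (Φ : X → Y) :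
    ∃ D : Set X, D.Countable ∧ range Φ ⊆ closure (Φ '' D) := by
  obtain ⟨t, hts, htc, hdense⟩ :=
    (IsSeparable.of_separableSpace (range Φ)).exists_countable_dense_subset
  have := htc.to_subtype
  choose g hg using fun y : t => hts y.2
  refine ⟨range g, countable_range g, hdense.trans (closure_mono ?_)⟩
  intro y hy
  exact ⟨g ⟨y, hy⟩, mem_range_self _, hg _⟩

theorem IsCompact.metrizableSpace_image {α β : Type*} [TopologicalSpace α] [MetrizableSpace α]
    [TopologicalSpace β] [T2Space β] {S : Set α} (hS : IsCompact S) {f : α → β}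
    (hf : Continuous f) (hinj : InjOn f S) : MetrizableSpace (f '' S) := by
  have := isCompact_iff_compactSpace.mp hS
  let e : S ≃ f '' S := Equiv.ofBijective (S.imageFactorization f)
    ⟨hinj.imageFactorization_injective, imageFactorization_surjective⟩
  have he : Continuous e := (hf.comp continuous_subtype_val).subtype_mk _
  exact (he.homeoOfEquivCompactToT2).symm.isEmbedding.metrizableSpace

theorem BoundedContinuousFunction.continuous_toContinuousMap {X E : Type*} [TopologicalSpace X]
    [PseudoMetricSpace E] : Continuous (toContinuousMap : (X →ᵇ E) → C(X, E)) :=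
  continuous_iff_seqContinuous.mpr fun _ _ hF =>
    ContinuousMap.tendsto_iff_forall_isCompact_tendstoUniformlyOn.mpr fun _ _ =>
      (tendsto_iff_tendstoUniformly.mp hF).tendstoUniformlyOn

noncomputable def Pseudocompact.toBoundedContinuousFunction {X : Type*} [TopologicalSpace X]
    (hX : Pseudocompact X) (f : C(X, ℝ)) : X →ᵇ ℝ :=
  ⟨f, Metric.isBounded_range_iff.mp <| isBounded_iff_forall_norm_le.mpr <|
    let ⟨M, hM⟩ := hX f; ⟨M, forall_mem_range.mpr hM⟩⟩

namespace SelectivelyOmegaBounded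

variable {X : Type*} [TopologicalSpace X]

theorem tendstoUniformly_of_tendsto {E : Type*} [PseudoMetricSpace E]
    (hX : SelectivelyOmegaBounded X) {F : ℕ → C(X, E)} {g : C(X, E)}
    (hF : Tendsto F atTop (𝓝 g)) : TendstoUniformly (fun k => ⇑(F k)) g atTop := by
  by_contra hnot
  obtain ⟨ε, hε, hfar⟩ : ∃ ε > 0, ∃ᶠ k in atTop, ∃ x, ε ≤ dist (g x) (F k x) := by
    simpa [Metric.tendstoUniformly_iff, frequently_atTop] using hnot
  obtain ⟨κ, hκ, hκfar⟩ := extraction_of_frequently_atTop hfar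
  let U : ℕ → Set X := fun j => {x | ε / 2 < dist (g x) (F (κ j) x)}
  have hU : ∀ j, IsOpen (U j) := fun j =>
    isOpen_lt continuous_const (g.continuous.dist (F (κ j)).continuous)
  have hUne : ∀ j, (U j).Nonempty := fun j =>
    let ⟨x, hx⟩ := hκfar j
    ⟨x, show ε / 2 < _ by linarith⟩
  obtain ⟨z, hzU, ψ, hψ, hM⟩ := hX U hU hUne
  have hclose := Metric.tendstoUniformlyOn_iff.mp
    (ContinuousMap.tendsto_iff_forall_isCompact_tendstoUniformlyOn.mp hF _ hM) _ (half_pos hε)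
  obtain ⟨j, hj⟩ := ((hκ.comp hψ).tendsto_atTop.eventually hclose).exists
  exact (hj (z (ψ j)) (subset_closure (mem_range_self j))).not_gt (hzU (ψ j))

theorem tendsto_comp_of_tendsto_comp {Y Z : Type*} [TopologicalSpace Y] [MetrizableSpace Y]
    [PseudoMetricSpace Z] (hX : SelectivelyOmegaBounded X) {Φ : X → Y} {w : X → Z}
    (hΦ : Continuous Φ) (hw : Continuous w) (hfib : ∀ z z', Φ z = Φ z' → w z = w z')
    {u : ℕ → X} {x : X} (hu : Tendsto (Φ ∘ u) atTop (𝓝 (Φ x))) :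
    Tendsto (w ∘ u) atTop (𝓝 (w x)) := by
  let _ := metrizableSpaceMetric Y
  by_contra hnot
  obtain ⟨ε, hε, hfar⟩ : ∃ ε > 0, ∃ᶠ m in atTop, ε ≤ dist (w (u m)) (w x) := by
    simpa [Metric.tendsto_atTop, frequently_atTop] using hnot
  obtain ⟨ν, hν, hνfar⟩ := extraction_of_frequently_atTop hfar
  -- Points of `V m` shadow `u (ν m)`: in trace up to `1 / (m + 1)`, in `w` up to `ε / 2`. A cluster
  -- point of the selected ones then has the trace of `x` but a `w`-value `ε / 2` away from `w x`.
  let V : ℕ → Set X := fun m =>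
    {z | dist (Φ z) (Φ (u (ν m))) < 1 / (m + 1)} ∩ {z | dist (w z) (w (u (ν m))) < ε / 2}
  have hV : ∀ m, IsOpen (V m) := fun m =>
    (isOpen_lt (hΦ.dist continuous_const) continuous_const).inter
      (isOpen_lt (hw.dist continuous_const) continuous_const)
  have hVne : ∀ m, (V m).Nonempty := fun m =>
    ⟨u (ν m), by simp only [V, mem_inter_iff, mem_ofPred, dist_self]; constructor <;> positivity⟩
  obtain ⟨z, hzV, ψ, hψ, hM⟩ := hX V hV hVne
  obtain ⟨y, -, hy⟩ := hM.exists_mapClusterPt (f := atTop) (u := z ∘ ψ)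
    (tendsto_principal.mpr (Eventually.of_forall fun j => subset_closure (mem_range_self j)))
  have hΦz : Tendsto (Φ ∘ z ∘ ψ) atTop (𝓝 (Φ x)) := by
    refine tendsto_of_tendsto_of_dist (hu.comp (hν.comp hψ).tendsto_atTop) ?_
    refine squeeze_zero (fun _ => dist_nonneg) (fun j => ?_)
      (tendsto_one_div_add_atTop_nhds_zero_nat.comp hψ.tendsto_atTop)
    rw [dist_comm]
    exact (hzV (ψ j)).1.le
  have hwy : w y = w x := hfib y x ((hy.continuousAt_comp hΦ.continuousAt).eq_of_tendsto hΦz)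
  have hwz : ∀ j, ε / 2 ≤ dist (w (z (ψ j))) (w x) := fun j => by
    have hclose : dist (w (z (ψ j))) (w (u (ν (ψ j)))) < ε / 2 := (hzV (ψ j)).2
    linarith [hνfar (ψ j), dist_triangle_left (w (u (ν (ψ j)))) (w x) (w (z (ψ j)))]
  have := (isClosed_le continuous_const (hw.dist continuous_const)).mem_of_mapClusterPt hy
    (Eventually.of_forall hwz)
  rw [mem_ofPred, hwy, dist_self] at this
  linarith

theorem eq_of_eqOn_of_range_subset_closure {Y Z : Type*} [TopologicalSpace Y]
    [MetrizableSpace Y] [MetricSpace Z] (hX : SelectivelyOmegaBounded X) {Φ : X → Y}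
    (hΦ : Continuous Φ) {D : Set X} (hD : range Φ ⊆ closure (Φ '' D)) {G G' : X → Z}
    (hG : Continuous G) (hG' : Continuous G') (hGΦ : ∀ z z', Φ z = Φ z' → G z = G z')
    (hG'Φ : ∀ z z', Φ z = Φ z' → G' z = G' z') (hGG' : EqOn G G' D) : G = G' := by
  funext x
  obtain ⟨y, hyD, hy⟩ := mem_closure_iff_seq_limit.mp (hD (mem_range_self x))
  choose u huD hΦu using hyD
  have hu : Tendsto (Φ ∘ u) atTop (𝓝 (Φ x)) := by
    simpa only [Function.comp_def, hΦu] using hy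
  refine tendsto_nhds_unique ?_ (hX.tendsto_comp_of_tendsto_comp hΦ hG' hG'Φ hu)
  exact (hX.tendsto_comp_of_tendsto_comp hΦ hG hGΦ hu).congr fun n => hGG' (huD n)

theorem isSeqCompact_of_isCompact (hX : SelectivelyOmegaBounded X) {K : Set C(X, ℝ)}
    (hK : IsCompact K) : IsSeqCompact K := by
  intro F hF
  let Φ : X → ℕ → ℝ := fun x k => F k x
  have hΦ : Continuous Φ := continuous_pi fun k => (F k).continuous
  obtain ⟨D, hDc, hD⟩ := exists_countable_range_subset_closure_image Φ
  have := hDc.to_subtype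
  let r : C(X, ℝ) → D → ℝ := fun f d => f d
  have hr : Continuous r := continuous_pi fun d => continuous_eval_const (d : X)
  obtain ⟨ℓ, -, σ, hσ, hℓ⟩ := (hK.image hr).isSeqCompact fun k => mem_image_of_mem r (hF k)
  have hFσ : ∀ᶠ k in atTop, (F ∘ σ) k ∈ K := Eventually.of_forall fun k => hF (σ k)
  have hfib : ∀ {G}, MapClusterPt G atTop (F ∘ σ) → ∀ z z', Φ z = Φ z' → G z = G z' :=
    fun hG z z' h => (isClosed_eq (continuous_eval_const z) (continuous_eval_const z'))
      |>.mem_of_mapClusterPt hG (Eventually.of_forall fun k => congrFun h (σ k))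
  have hDval : ∀ {G}, MapClusterPt G atTop (F ∘ σ) → ∀ d : D, G d = ℓ d := fun hG d =>
    (hG.continuousAt_comp ((continuous_apply d).comp hr).continuousAt).eq_of_tendsto
      (((continuous_apply d).tendsto ℓ).comp hℓ)
  obtain ⟨g, hgK, hg⟩ := hK.exists_mapClusterPt_of_frequently hFσ.frequently
  refine ⟨g, hgK, σ, hσ, hK.tendsto_nhds_of_unique_mapClusterPt hFσ fun G _ hG => ?_⟩
  refine DFunLike.coe_injective (hX.eq_of_eqOn_of_range_subset_closure hΦ hD G.continuous
    g.continuous (hfib hG) (hfib hg) fun d hd => ?_)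
  exact (hDval hG ⟨d, hd⟩).trans (hDval hg ⟨d, hd⟩).symm

end SelectivelyOmegaBounded

theorem stmt16_general (X : Type*) [TopologicalSpace X]
    (hpc : Pseudocompact X) (hsob : SelectivelyOmegaBounded X)
    (K : Set C(X, ℝ)) (hK : IsCompact K) :
    TopologicalSpace.MetrizableSpace K := by
  have he : SeqContinuous hpc.toBoundedContinuousFunction := fun _ _ hF =>
    tendsto_iff_tendstoUniformly.mpr (hsob.tendstoUniformly_of_tendsto hF)
  have hS : IsCompact (hpc.toBoundedContinuousFunction '' K) :=
    ((hsob.isSeqCompact_of_isCompact hK).image he).isCompact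
  have hK' : (·.toContinuousMap) '' (hpc.toBoundedContinuousFunction '' K) = K := by
    rw [image_image]
    exact image_id K
  rw [← hK']
  exact hS.metrizableSpace_image continuous_toContinuousMap
    (fun _ _ _ _ h => BoundedContinuousFunction.ext (ContinuousMap.ext_iff.mp h))

theorem stmt16 (X : Type*) [TopologicalSpace X] [T35Space X]
    (hpc : Pseudocompact X) (hsob : SelectivelyOmegaBounded X)
    (K : Set C(X, ℝ)) (hK : IsCompact K) :
    TopologicalSpace.MetrizableSpace K :=
  stmt16_general X hpc hsob K hK
end

section
/- If X is selectively ω-bounded and Y is pseudocompact (both Tychonoff), then the product X × Y is pseudocompact. -/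
open Filter Topology Set

theorem stmt18 (X Y : Type*) [TopologicalSpace X] [TopologicalSpace Y]
    [T35Space X] [T35Space Y]
    (hX : SelectivelyOmegaBounded X) (hY : Pseudocompact Y) :
    Pseudocompact (X × Y) := by
  intro F
  by_contra h
  push_neg at h
  -- For each n, pick a point where |F| > n
  have hz : ∀ n : ℕ, ∃ z : X × Y, (n : ℝ) < |F z| := by
    intro n
    obtain ⟨z, hz⟩ := h n
    exact ⟨z, hz⟩
  choose z hzn using hz
  -- Open boxes around z n where |F| > n
  have hW : ∀ n : ℕ, IsOpen {p : X × Y | (n : ℝ) < |F p|} := by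
    intro n
    exact isOpen_lt continuous_const (continuous_abs.comp F.continuous)
  have hbox : ∀ n : ℕ, ∃ (U : Set X) (V : Set Y), IsOpen U ∧ IsOpen V ∧
      (z n).1 ∈ U ∧ (z n).2 ∈ V ∧ U ×ˢ V ⊆ {p : X × Y | (n : ℝ) < |F p|} := by
    intro n
    have := (hW n).mem_nhds (show z n ∈ {p : X × Y | (n : ℝ) < |F p|} from hzn n)
    rcases mem_nhds_prod_iff'.mp this with ⟨U, V, hU, hxU, hV, hyV, hUV⟩
    exact ⟨U, V, hU, hV, hxU, hyV, hUV⟩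
  choose U V hUopen hVopen hzU hzV hUV using hbox
  -- Apply selective ω-boundedness
  obtain ⟨x, hxU, φ, hφ, hK⟩ := hX U hUopen (fun n => ⟨(z n).1, hzU n⟩)
  set K := closure (Set.range (x ∘ φ)) with hKdef
  -- g y = sup_{x ∈ K} |F (x, y)| is continuous
  have hFc : Continuous fun p : Y × X => |F (p.2, p.1)| := by
    exact continuous_abs.comp (F.continuous.comp (continuous_snd.prodMk continuous_fst))
  have hgc : Continuous fun y : Y => sSup ((fun x : X => |F (x, y)|) '' K) :=
    IsCompact.continuous_sSup (f := fun (y : Y) (x : X) => |F (x, y)|) hK hFc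
  obtain ⟨M, hM⟩ := hY ⟨_, hgc⟩
  obtain ⟨n, hn⟩ := exists_nat_gt M
  -- the witness point
  set y₀ := (z (φ n)).2
  have hxK : x (φ n) ∈ K := subset_closure ⟨n, rfl⟩
  have hbdd : BddAbove ((fun x : X => |F (x, y₀)|) '' K) :=
    hK.bddAbove_image (Continuous.continuousOn (by
      exact continuous_abs.comp (F.continuous.comp (continuous_id.prodMk continuous_const))))
  have hle : |F (x (φ n), y₀)| ≤ sSup ((fun x : X => |F (x, y₀)|) '' K) :=
    le_csSup hbdd ⟨x (φ n), hxK, rfl⟩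
  have hgt : (n : ℝ) < |F (x (φ n), y₀)| := by
    have h1 : (x (φ n), y₀) ∈ U (φ n) ×ˢ V (φ n) := ⟨hxU (φ n), hzV (φ n)⟩
    have h2 := hUV (φ n) h1
    have h3 : (n : ℝ) ≤ (φ n : ℝ) := by exact_mod_cast hφ.id_le n
    exact lt_of_le_of_lt h3 h2
  have hMn := hM y₀
  simp only [ContinuousMap.coe_mk] at hMn
  have : sSup ((fun x : X => |F (x, y₀)|) '' K) ≤ M := (le_abs_self _).trans hMn
  linarith
end
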